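/- arXiv:math/0201054 — 2 statements merged into one kernel-verified Lean document; each statement's English description precedes it below -/
import Mathlib

section
/- Let A = Mₙ(ℂ) and let h be an algebra automorphism of A. Then there exists an invertible element γ ∈ A such that h(a) = γ a γ⁻¹ for all a ∈ A. -/
/-!
Transported along `Matrix.toLinAlgEquiv'`, an automorphism of `Matrix n n K` becomes an
automorphism of `Module.End K (n → K)`, and every such automorphism is conjugation by a linear
automorphism `T` (`AlgEquiv.eq_linearEquivConjAlgEquiv`); the matrix of `T` is the required unit.
-/

theorem Matrix.exists_unit_algEquiv_apply_eq_conj {K n : Type*} [Semifield K] [Fintype n]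
    [DecidableEq n] (f : Matrix n n K ≃ₐ[K] Matrix n n K) :
    ∃ γ : (Matrix n n K)ˣ, ∀ a, f a = γ * a * (γ⁻¹ : (Matrix n n K)ˣ) := by
  let φ : Matrix n n K ≃ₐ[K] Module.End K (n → K) := Matrix.toLinAlgEquiv'
  obtain ⟨T, hT⟩ := (φ.symm.trans (f.trans φ)).eq_linearEquivConjAlgEquiv
  refine ⟨Units.map (φ.symm : Module.End K (n → K) →* Matrix n n K)
    (LinearMap.GeneralLinearGroup.ofLinearEquiv T), fun a => φ.injective ?_⟩
  have hfa : φ (f a) = T.conjAlgEquiv K (φ a) := by simpa using congr($hT (φ a))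
  simp only [hfa, map_mul, Units.coe_map, Units.coe_map_inv, MonoidHom.coe_coe,
    AlgEquiv.apply_symm_apply]
  rfl

/-- Skolem–Noether for matrix algebras: every ℂ-algebra automorphism of Mₙ(ℂ)
is inner, i.e. given by conjugation by some invertible matrix γ. -/
theorem matrix_algebra_automorphism_is_inner (n : ℕ)
    (h : Matrix (Fin n) (Fin n) ℂ ≃ₐ[ℂ] Matrix (Fin n) (Fin n) ℂ) :
    ∃ γ : (Matrix (Fin n) (Fin n) ℂ)ˣ,
      ∀ a : Matrix (Fin n) (Fin n) ℂ,
        h a = (γ : Matrix (Fin n) (Fin n) ℂ) * a * ((γ⁻¹ : (Matrix (Fin n) (Fin n) ℂ)ˣ) : Matrix (Fin n) (Fin n) ℂ) :=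
  Matrix.exists_unit_algEquiv_apply_eq_conj h
end

section
/- Let B be a module over a ring, ψ an automorphism of B, and B₁ a nonzero submodule such that B = Σ_{j≥0} ψʲ(B₁). Let t be the maximal nonnegative integer such that the sum Σ_{j=0}^{t−1} ψʲ(B₁) is direct. Then ψˡ(B₁) ⊆ ⊕_{j=0}^{t−1} ψʲ(B₁) for all l ≥ 0, and hence B = ⊕_{j=0}^{t−1} ψʲ(B₁). -/
/-- If B = Σ_{j≥0} ψʲ(B₁) for a nonzero submodule B₁ and t is maximal such that
the sum of the first t translates is direct, then ψˡ(B₁) ⊆ ⊕_{j<t} ψʲ(B₁) for all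
l ≥ 0, and hence B = ⊕_{j<t} ψʲ(B₁). -/
theorem translates_span_with_maximal_direct_part
    {R : Type*} [Ring R] {B : Type*} [AddCommGroup B] [Module R B]
    (ψ : B ≃ₗ[R] B) (B₁ : Submodule R B) (hB₁ : B₁ ≠ ⊥)
    (hsimple : IsSimpleModule R B₁)
    (hsum : (⨆ j : ℕ, Submodule.map ((ψ ^ j) : B ≃ₗ[R] B).toLinearMap B₁) = ⊤)
    (t : ℕ)
    (hdir : iSupIndep (fun j : Fin t => Submodule.map ((ψ ^ (j : ℕ)) : B ≃ₗ[R] B).toLinearMap B₁))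
    (hmax : ¬ iSupIndep
      (fun j : Fin (t + 1) => Submodule.map ((ψ ^ (j : ℕ)) : B ≃ₗ[R] B).toLinearMap B₁)) :
    (∀ l : ℕ, Submodule.map ((ψ ^ l) : B ≃ₗ[R] B).toLinearMap B₁ ≤
      ⨆ j : Fin t, Submodule.map ((ψ ^ (j : ℕ)) : B ≃ₗ[R] B).toLinearMap B₁) ∧
    (⨆ j : Fin t, Submodule.map ((ψ ^ (j : ℕ)) : B ≃ₗ[R] B).toLinearMap B₁) = ⊤ := by
  set M : ℕ → Submodule R B :=
    fun l => Submodule.map ((ψ ^ l) : B ≃ₗ[R] B).toLinearMap B₁ with hM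
  set S : Submodule R B := ⨆ j : Fin t, M (j : ℕ) with hS
  -- each translate is an atom
  have hatom : ∀ l : ℕ, IsAtom (M l) := by
    intro l
    rw [← isSimpleModule_iff_isAtom]
    exact IsSimpleModule.congr (((ψ ^ l : B ≃ₗ[R] B).submoduleMap B₁).symm)
  -- t is positive
  have ht : 0 < t := by
    rcases Nat.eq_zero_or_pos t with h0 | h
    · exfalso
      apply hmax
      intro i
      subst h0
      have : ∀ j : Fin 1, j ≠ i → M (j : ℕ) = ⊥ := by
        intro j hj
        exact absurd (Subsingleton.elim j i) hj
      have hsup : (⨆ (j : Fin 1) (_ : j ≠ i), M (j : ℕ)) ≤ ⊥ := by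
        apply iSup_le; intro j; apply iSup_le; intro hj
        rw [this j hj]
      exact Disjoint.mono_right hsup disjoint_bot_right
    · exact h
  -- the key claim: M t ≤ S
  have key : M t ≤ S := by
    by_contra hnot
    -- then M t is disjoint from S, since M t is an atom
    have hdisj : Disjoint (M t) S := by
      rcases ((hatom t).le_iff.mp inf_le_left : M t ⊓ S = ⊥ ∨ M t ⊓ S = M t) with h | h
      · exact disjoint_iff.mpr h
      · exact absurd (inf_eq_left.mp h) hnot
    apply hmax
    intro i
    by_cases hi : (i : ℕ) < t
    · -- i is not the last index
      set i' : Fin t := ⟨(i : ℕ), hi⟩ with hi'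
      set b : Submodule R B := ⨆ (j : Fin t) (_ : j ≠ i'), M (j : ℕ) with hb
      have h1 : Disjoint (M (i : ℕ)) b := hdir i'
      have h2 : Disjoint (M (i : ℕ) ⊔ b) (M t) := by
        apply Disjoint.mono_left _ hdisj.symm
        apply sup_le
        · exact le_iSup (fun j : Fin t => M (j : ℕ)) i'
        · apply iSup_le; intro j; apply iSup_le; intro _
          exact le_iSup (fun j : Fin t => M (j : ℕ)) j
      have h3 : Disjoint (M (i : ℕ)) (b ⊔ M t) :=
        h1.disjoint_sup_right_of_disjoint_sup_left h2
      apply Disjoint.mono_right _ h3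
      apply iSup_le; intro j; apply iSup_le; intro hj
      by_cases hjt : (j : ℕ) < t
      · apply le_sup_of_le_left
        have hne : (⟨(j : ℕ), hjt⟩ : Fin t) ≠ i' := by
          intro hc
          apply hj
          apply Fin.ext
          simpa [hi'] using congrArg (Fin.val) hc
        exact le_iSup_of_le (⟨(j : ℕ), hjt⟩ : Fin t) (le_iSup_of_le hne le_rfl)
      · have hjt' : (j : ℕ) = t := Nat.le_antisymm (Nat.lt_succ_iff.mp j.isLt) (Nat.le_of_not_lt hjt)
        show M (j : ℕ) ≤ b ⊔ M t
        rw [hjt']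
        exact le_sup_right
    · -- i is the last index
      have hit : (i : ℕ) = t := Nat.le_antisymm (Nat.lt_succ_iff.mp i.isLt) (Nat.le_of_not_lt hi)
      show Disjoint (M (i : ℕ)) (⨆ (j : Fin (t+1)) (_ : j ≠ i), M (j : ℕ))
      rw [hit]
      apply Disjoint.mono_right _ hdisj
      apply iSup_le; intro j; apply iSup_le; intro hj
      have hjt : (j : ℕ) < t := by
        rcases Nat.lt_or_ge (j : ℕ) t with h | h
        · exact h
        · exact absurd (Fin.ext (by omega : (j : ℕ) = (i : ℕ))) hj
      exact le_iSup (fun j : Fin t => M (j : ℕ)) ⟨(j : ℕ), hjt⟩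
  -- ψ maps S into S
  have hψS : ∀ l : ℕ, M l ≤ S := by
    intro l
    induction l with
    | zero => exact le_iSup (fun j : Fin t => M (j : ℕ)) ⟨0, ht⟩
    | succ n ih =>
      have hmap : M (n + 1) = Submodule.map ψ.toLinearMap (M n) := by
        rw [hM]
        simp only [pow_succ', LinearEquiv.coe_toLinearMap_mul, Module.End.mul_eq_comp,
          Submodule.map_comp]
      rw [hmap]
      calc Submodule.map ψ.toLinearMap (M n) ≤ Submodule.map ψ.toLinearMap S :=
            Submodule.map_mono ih
        _ ≤ S := by
            rw [hS, Submodule.map_iSup]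
            apply iSup_le
            intro j
            have : Submodule.map ψ.toLinearMap (M (j : ℕ)) = M ((j : ℕ) + 1) := by
              rw [hM]
              simp only [pow_succ', LinearEquiv.coe_toLinearMap_mul, Module.End.mul_eq_comp,
                Submodule.map_comp]
            rw [this]
            rcases Nat.lt_or_ge ((j : ℕ) + 1) t with h | h
            · exact le_iSup (fun j : Fin t => M (j : ℕ)) ⟨(j : ℕ) + 1, h⟩
            · have : (j : ℕ) + 1 = t := by omega
              rw [this]; exact key
  refine ⟨hψS, ?_⟩
  apply le_antisymm le_top
  rw [← hsum]
  exact iSup_le hψS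
end
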